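/- arXiv:2208.03010 — 4 statements merged into one kernel-verified Lean document; each statement's English description precedes it below -/
import Mathlib

section
/- Let (X,d) be a metric space, (x_k) a sequence in X, and suppose δ_{A^I} satisfies property AP A^I O. Then (x_k) is A^I-statistically Cauchy if and only if (x_k) is A^{I*}-statistically Cauchy, i.e., if and only if there exists an infinite set M ⊆ ℕ with δ_{A^I}(M) = 1 such that the subsequence of (x_k) indexed by the elements of M in increasing order is a Cauchy sequence in X (paper's Theorem 3.6). -/
open Filter Topology

/-- `A` is a nonnegative regular summability matrix. -/
structure RegularMatrix (A : ℕ → ℕ → ℝ) : Prop where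
  nonneg : ∀ n k, 0 ≤ A n k
  summable : ∀ n, Summable (A n)
  bounded : ∃ C : ℝ, ∀ n, (∑' k, |A n k|) ≤ C
  col_lim : ∀ k, Tendsto (fun n => A n k) atTop (𝓝 0)
  row_sum : Tendsto (fun n => ∑' k, A n k) atTop (𝓝 1)

/-- `I` is a non-trivial admissible ideal on ℕ. -/
structure AdmissibleIdeal (I : Set (Set ℕ)) : Prop where
  union_mem : ∀ {a b : Set ℕ}, a ∈ I → b ∈ I → a ∪ b ∈ I
  subset_mem : ∀ {a b : Set ℕ}, a ∈ I → b ⊆ a → b ∈ I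
  finite_mem : ∀ {s : Set ℕ}, s.Finite → s ∈ I
  univ_not_mem : Set.univ ∉ I

/-- `I`-limit of a real sequence. -/
def ILim (I : Set (Set ℕ)) (t : ℕ → ℝ) (L : ℝ) : Prop :=
  ∀ ε > 0, {n : ℕ | ε ≤ |t n - L|} ∈ I

/-- The set `M ⊆ ℕ` has `A^I`-density `δ`, i.e. `I-lim_n Σ_{k∈M} a_{nk} = δ`. -/
def AIDensity (I : Set (Set ℕ)) (A : ℕ → ℕ → ℝ) (M : Set ℕ) (δ : ℝ) : Prop :=
  ILim I (fun n => ∑' k, M.indicator (A n) k) δ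

/-- `x` is `A^I`-statistically convergent to `L`. -/
def AIStatConv {X : Type*} [MetricSpace X] (I : Set (Set ℕ)) (A : ℕ → ℕ → ℝ)
    (x : ℕ → X) (L : X) : Prop :=
  ∀ ε > 0, AIDensity I A {k : ℕ | ε ≤ dist (x k) L} 0

/-- `x` is `A^I`-statistically Cauchy. -/
def AIStatCauchy {X : Type*} [MetricSpace X] (I : Set (Set ℕ)) (A : ℕ → ℕ → ℝ)
    (x : ℕ → X) : Prop :=
  ∀ γ > 0, ∃ k₀ : ℕ, AIDensity I A {k : ℕ | γ ≤ dist (x k) (x k₀)} 0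

/-- The additive property for `A^I`-density zero sets (AP`A^I`O). -/
def APAIO (I : Set (Set ℕ)) (A : ℕ → ℕ → ℝ) : Prop :=
  ∀ G : ℕ → Set ℕ, Pairwise (Function.onFun Disjoint G) →
    (∀ j, AIDensity I A (G j) 0) →
    ∃ H : ℕ → Set ℕ, (∀ j, (symmDiff (G j) (H j)).Finite) ∧
      AIDensity I A (⋃ j, H j) 0

/-- The set of `A^I`-statistical limit points of `x`: points to which some
subsequence of `x`, indexed by an (automatically infinite) set of indices whose
`A^I`-density is not equal to `0` (nonzero or nonexistent), converges. -/
def AIStatLimitPts {X : Type*} [MetricSpace X] (I : Set (Set ℕ)) (A : ℕ → ℕ → ℝ)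
    (x : ℕ → X) : Set X :=
  {ζ : X | ∃ f : ℕ → ℕ, StrictMono f ∧ ¬ AIDensity I A (Set.range f) 0 ∧
    Tendsto (fun j => x (f j)) atTop (𝓝 ζ)}

/-- The set of `A^I`-statistical cluster points of `x`. -/
def AIStatClusterPts {X : Type*} [MetricSpace X] (I : Set (Set ℕ)) (A : ℕ → ℕ → ℝ)
    (x : ℕ → X) : Set X :=
  {ν : X | ∀ ε > 0, ¬ AIDensity I A {k : ℕ | dist (x k) ν < ε} 0}

/-- The set of ordinary limit points of `x` (limits of subsequences). -/
def LimitPts {X : Type*} [MetricSpace X] (x : ℕ → X) : Set X :=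
  {ζ : X | ∃ f : ℕ → ℕ, StrictMono f ∧ Tendsto (fun j => x (f j)) atTop (𝓝 ζ)}

section helpers
variable {I : Set (Set ℕ)} {A : ℕ → ℕ → ℝ}

lemma iLim_of_tendsto (hI : AdmissibleIdeal I) {t : ℕ → ℝ} {L : ℝ}
    (h : Tendsto t atTop (𝓝 L)) : ILim I t L := by
  intro ε hε
  obtain ⟨N, hN⟩ := Metric.tendsto_atTop.mp h ε hε
  apply hI.finite_mem
  apply Set.Finite.subset (Set.finite_Iio N)
  intro n hn
  simp only [Set.mem_setOf_eq] at hn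
  by_contra hlt
  simp only [Set.mem_Iio, not_lt] at hlt
  have := hN n hlt
  rw [Real.dist_eq] at this
  linarith

lemma ind_summable (hA : RegularMatrix A) (n : ℕ) (M : Set ℕ) :
    Summable (M.indicator (A n)) := (hA.summable n).indicator M

lemma tsum_ind_nonneg (hA : RegularMatrix A) (n : ℕ) (M : Set ℕ) :
    0 ≤ ∑' k, M.indicator (A n) k :=
  tsum_nonneg fun k => Set.indicator_nonneg (fun k _ => hA.nonneg n k) k

lemma tsum_ind_mono (hA : RegularMatrix A) (n : ℕ) {M N : Set ℕ} (h : M ⊆ N) :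
    ∑' k, M.indicator (A n) k ≤ ∑' k, N.indicator (A n) k :=
  Summable.tsum_le_tsum
    (fun k => Set.indicator_le_indicator_of_subset h (fun k => hA.nonneg n k) k)
    (ind_summable hA n M) (ind_summable hA n N)

lemma dens_mono_zero (hA : RegularMatrix A) (hI : AdmissibleIdeal I) {M N : Set ℕ}
    (hMN : M ⊆ N) (hN : AIDensity I A N 0) : AIDensity I A M 0 := by
  intro ε hε
  refine hI.subset_mem (hN ε hε) ?_
  intro n hn
  simp only [Set.mem_setOf_eq, sub_zero] at *
  have h1 := tsum_ind_nonneg hA n M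
  have h2 := tsum_ind_mono hA n hMN
  have h3 := tsum_ind_nonneg hA n N
  rw [abs_of_nonneg h1] at hn
  rw [abs_of_nonneg h3]
  linarith

lemma dens_union_zero (hA : RegularMatrix A) (hI : AdmissibleIdeal I) {M N : Set ℕ}
    (hM : AIDensity I A M 0) (hN : AIDensity I A N 0) : AIDensity I A (M ∪ N) 0 := by
  intro ε hε
  refine hI.subset_mem (hI.union_mem (hM (ε/2) (by linarith)) (hN (ε/2) (by linarith))) ?_
  intro n hn
  simp only [Set.mem_setOf_eq, sub_zero, Set.mem_union] at *
  have key : ∑' k, (M ∪ N).indicator (A n) k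
      ≤ ∑' k, M.indicator (A n) k + ∑' k, N.indicator (A n) k := by
    rw [← Summable.tsum_add (ind_summable hA n M) (ind_summable hA n N)]
    refine Summable.tsum_le_tsum ?_ (ind_summable hA n _)
      ((ind_summable hA n M).add (ind_summable hA n N))
    intro k
    by_cases hkM : k ∈ M <;> by_cases hkN : k ∈ N <;>
      simp [Set.indicator, hkM, hkN, hA.nonneg n k]
  by_contra hc
  push_neg at hc
  obtain ⟨h1, h2⟩ := hc
  rw [abs_of_nonneg (tsum_ind_nonneg hA n _)] at hn h1 h2
  linarith

lemma dens_finite_zero (hA : RegularMatrix A) (hI : AdmissibleIdeal I) {M : Set ℕ}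
    (hM : M.Finite) : AIDensity I A M 0 := by
  apply iLim_of_tendsto hI
  have heq : ∀ n, ∑' k, M.indicator (A n) k = ∑ k ∈ hM.toFinset, A n k := by
    intro n
    rw [tsum_eq_sum (s := hM.toFinset)
      (fun k hk => Set.indicator_of_notMem (fun h => hk (hM.mem_toFinset.mpr h)) _)]
    exact Finset.sum_congr rfl fun k hk => Set.indicator_of_mem (hM.mem_toFinset.mp hk) _
  simp only [heq]
  have := tendsto_finset_sum hM.toFinset (fun k _ => hA.col_lim k)
  simpa using this

lemma tsum_split (hA : RegularMatrix A) (M : Set ℕ) (n : ℕ) :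
    ∑' k, A n k = ∑' k, M.indicator (A n) k + ∑' k, Mᶜ.indicator (A n) k := by
  rw [← Summable.tsum_add (ind_summable hA n M) (ind_summable hA n Mᶜ)]
  congr 1
  ext k
  exact (Set.indicator_self_add_compl_apply M (A n) k).symm

lemma dens_compl (hA : RegularMatrix A) (hI : AdmissibleIdeal I) {M : Set ℕ} {δ : ℝ}
    (h : AIDensity I A M δ) : AIDensity I A Mᶜ (1 - δ) := by
  intro ε hε
  have hrow : ILim I (fun n => ∑' k, A n k) 1 := iLim_of_tendsto hI hA.row_sum
  refine hI.subset_mem (hI.union_mem (hrow (ε/2) (by linarith)) (h (ε/2) (by linarith))) ?_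
  intro n hn
  simp only [Set.mem_setOf_eq, Set.mem_union] at *
  by_contra hc
  push_neg at hc
  obtain ⟨h1, h2⟩ := hc
  have hsplit := tsum_split hA M n
  have habs := abs_sub ((∑' k, A n k) - 1) ((∑' k, M.indicator (A n) k) - δ)
  have heq : (∑' k, A n k) - 1 - ((∑' k, M.indicator (A n) k) - δ)
      = (∑' k, Mᶜ.indicator (A n) k) - (1 - δ) := by
    rw [hsplit]; ring
  rw [heq] at habs
  linarith

lemma dens_not_zero_one (hI : AdmissibleIdeal I) {t : ℕ → ℝ}
    (h0 : ILim I t 0) (h1 : ILim I t 1) : False := by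
  apply hI.univ_not_mem
  refine hI.subset_mem (hI.union_mem (h0 (1/2) one_half_pos) (h1 (1/2) one_half_pos)) ?_
  intro n _
  simp only [Set.mem_union, Set.mem_setOf_eq, sub_zero]
  by_contra hc
  push_neg at hc
  obtain ⟨h1', h2'⟩ := hc
  obtain ⟨a1, a2⟩ := abs_lt.mp h1'
  obtain ⟨b1, b2⟩ := abs_lt.mp h2'
  linarith

lemma infinite_of_dens_one (hA : RegularMatrix A) (hI : AdmissibleIdeal I) {M : Set ℕ}
    (h : AIDensity I A M 1) : M.Infinite := by
  by_contra h'
  rw [Set.not_infinite] at h'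
  exact dens_not_zero_one hI (dens_finite_zero hA hI h') h

end helpers

theorem stmt_5 {X : Type*} [MetricSpace X] (A : ℕ → ℕ → ℝ) (I : Set (Set ℕ))
    (hA : RegularMatrix A) (hI : AdmissibleIdeal I) (hAP : APAIO I A)
    (x : ℕ → X) :
    AIStatCauchy I A x ↔
      ∃ f : ℕ → ℕ, StrictMono f ∧ AIDensity I A (Set.range f) 1 ∧
        CauchySeq (fun j => x (f j)) := by
  constructor
  · intro h
    choose kk hkk using fun j : ℕ => h (1/(j+1:ℝ)) (by positivity)
    set C : ℕ → Set ℕ := fun j => {k | 1/(j+1:ℝ) ≤ dist (x k) (x (kk j))} with hC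
    set G := disjointed C with hG
    have hGdisj : Pairwise (Function.onFun Disjoint G) := disjoint_disjointed C
    have hGdens : ∀ j, AIDensity I A (G j) 0 := fun j =>
      dens_mono_zero hA hI (disjointed_le C j) (hkk j)
    obtain ⟨H, hGH, hHdens⟩ := hAP G hGdisj hGdens
    set M := (⋃ j, H j)ᶜ with hM
    have hMdens : AIDensity I A M 1 := by
      have := dens_compl hA hI hHdens
      rw [sub_zero] at this
      exact this
    have hMinf : M.Infinite := infinite_of_dens_one hA hI hMdens
    have hkey : ∀ j, (M ∩ C j).Finite := by
      intro j
      have hsub : M ∩ C j ⊆ ⋃ i ∈ Finset.range (j+1), symmDiff (G i) (H i) := by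
        rintro k ⟨hkM, hkC⟩
        have h1 : k ∈ (partialSups C) j := le_partialSups C j hkC
        rw [← partialSups_disjointed, partialSups_eq_biSup] at h1
        simp only [Set.iSup_eq_iUnion, Set.mem_iUnion] at h1
        obtain ⟨i, hij, hkG⟩ := h1
        have hkH : k ∉ H i := fun hh => hkM (Set.mem_iUnion.mpr ⟨i, hh⟩)
        refine Set.mem_biUnion (Finset.mem_range.mpr (Nat.lt_succ_of_le hij)) ?_
        exact Set.mem_symmDiff.mpr (Or.inl ⟨hkG, hkH⟩)
      exact Set.Finite.subset (Set.Finite.biUnion (Finset.range (j+1)).finite_toSet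
        (fun i _ => hGH i)) hsub
    classical
    haveI : Infinite M := hMinf.to_subtype
    refine ⟨⇑(Nat.orderEmbeddingOfSet M), (Nat.orderEmbeddingOfSet M).strictMono, ?_, ?_⟩
    · rw [Nat.orderEmbeddingOfSet_range]; exact hMdens
    · rw [Metric.cauchySeq_iff]
      intro ε hε
      obtain ⟨j, hj⟩ := exists_nat_one_div_lt (half_pos hε)
      obtain ⟨B, hB⟩ := (hkey j).bddAbove
      set g : ℕ → ℕ := ⇑(Nat.orderEmbeddingOfSet M) with hg
      have hmem : ∀ i, B+1 ≤ i → dist (x (g i)) (x (kk j)) < 1/(j+1:ℝ) := by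
        intro i hi
        have hgm : g i ∈ M := by
          have hr := Nat.orderEmbeddingOfSet_range (s := M)
          rw [← hr]
          exact Set.mem_range_self i
        by_contra hc
        push_neg at hc
        have : g i ∈ M ∩ C j := ⟨hgm, hc⟩
        have hle := hB this
        have hgi : i ≤ g i := (Nat.orderEmbeddingOfSet M).strictMono.le_apply
        omega
      refine ⟨B+1, fun m hm n hn => ?_⟩
      have d1 := hmem m hm
      have d2 := hmem n hn
      calc dist (x (g m)) (x (g n))
          ≤ dist (x (g m)) (x (kk j)) + dist (x (kk j)) (x (g n)) := dist_triangle _ _ _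
        _ < ε := by rw [dist_comm (x (kk j))]; linarith
  · rintro ⟨f, hf, hdens, hcauchy⟩
    intro γ hγ
    obtain ⟨N, hN⟩ := Metric.cauchySeq_iff.mp hcauchy γ hγ
    refine ⟨f N, ?_⟩
    have hc : AIDensity I A (Set.range f)ᶜ 0 := by
      have := dens_compl hA hI hdens
      rw [sub_self] at this
      exact this
    have hfin : AIDensity I A (f '' Set.Iio N) 0 :=
      dens_finite_zero hA hI ((Set.finite_Iio N).image f)
    refine dens_mono_zero hA hI ?_ (dens_union_zero hA hI hc hfin)
    intro k hk
    simp only [Set.mem_setOf_eq] at hk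
    by_cases hr : k ∈ Set.range f
    · obtain ⟨j, rfl⟩ := hr
      right
      rcases lt_or_ge j N with hj | hj
      · exact ⟨j, hj, rfl⟩
      · exact absurd hk (by simpa using (hN j hj N le_rfl).not_ge)
    · exact Or.inl hr
end

section
/- Let (X,d) be a metric space and (x_k) a sequence in X. Then Λ_x ⊆ Γ_x ⊆ L_x, where Λ_x is the set of A^I-statistical limit points of (x_k), Γ_x is the set of A^I-statistical cluster points of (x_k), and L_x is the set of ordinary limit points of (x_k) (points that are limits of some subsequence of x) (paper's Theorem 4.1). -/
open Filter Topology

lemma aux_dens_mono {A : ℕ → ℕ → ℝ} {I : Set (Set ℕ)} (hA : RegularMatrix A)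
    (hI : AdmissibleIdeal I) {M N : Set ℕ} (hMN : M ⊆ N)
    (hN : AIDensity I A N 0) : AIDensity I A M 0 := by
  intro ε hε
  refine hI.subset_mem (hN ε hε) ?_
  intro n hn
  simp only [Set.mem_setOf_eq, sub_zero] at hn ⊢
  have h1 : (0:ℝ) ≤ ∑' k, M.indicator (A n) k :=
    tsum_nonneg fun k => Set.indicator_nonneg (fun k _ => hA.nonneg n k) k
  have h2 : (0:ℝ) ≤ ∑' k, N.indicator (A n) k :=
    tsum_nonneg fun k => Set.indicator_nonneg (fun k _ => hA.nonneg n k) k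
  have h3 : (∑' k, M.indicator (A n) k) ≤ ∑' k, N.indicator (A n) k := by
    refine Summable.tsum_le_tsum (fun k => ?_) ((hA.summable n).indicator M)
      ((hA.summable n).indicator N)
    exact Set.indicator_le_indicator_of_subset hMN (fun k => hA.nonneg n k) k
  rw [abs_of_nonneg h2]
  rw [abs_of_nonneg h1] at hn
  linarith

lemma aux_dens_finite {A : ℕ → ℕ → ℝ} {I : Set (Set ℕ)} (hA : RegularMatrix A)
    (hI : AdmissibleIdeal I) {F : Set ℕ} (hF : F.Finite) : AIDensity I A F 0 := by
  have htend : Tendsto (fun n => ∑' k, F.indicator (A n) k) atTop (𝓝 0) := by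
    have heq : ∀ n, (∑' k, F.indicator (A n) k) = ∑ k ∈ hF.toFinset, A n k := by
      intro n
      rw [tsum_eq_sum (s := hF.toFinset)]
      · exact Finset.sum_congr rfl fun k hk =>
          Set.indicator_of_mem (hF.mem_toFinset.mp hk) _
      · intro k hk
        exact Set.indicator_of_notMem (fun h => hk (hF.mem_toFinset.mpr h)) _
    simp only [heq]
    have : Tendsto (fun n => ∑ k ∈ hF.toFinset, A n k) atTop
        (𝓝 (∑ k ∈ hF.toFinset, (0:ℝ))) :=
      tendsto_finset_sum _ fun k _ => hA.col_lim k
    simpa using this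
  intro ε hε
  obtain ⟨N, hN⟩ := Metric.tendsto_atTop.mp htend ε hε
  refine hI.finite_mem ((Set.finite_Iio N).subset ?_)
  intro n hn
  simp only [Set.mem_setOf_eq] at hn
  by_contra hc
  have := hN n (le_of_not_gt hc)
  rw [Real.dist_eq] at this
  linarith

lemma aux_dens_union {A : ℕ → ℕ → ℝ} {I : Set (Set ℕ)} (hA : RegularMatrix A)
    (hI : AdmissibleIdeal I) {M N : Set ℕ} (hM : AIDensity I A M 0)
    (hN : AIDensity I A N 0) : AIDensity I A (M ∪ N) 0 := by
  intro ε hε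
  have hhalf : (0:ℝ) < ε / 2 := by linarith
  refine hI.subset_mem (hI.union_mem (hM (ε/2) hhalf) (hN (ε/2) hhalf)) ?_
  intro n hn
  simp only [Set.mem_setOf_eq, sub_zero, Set.mem_union] at hn ⊢
  by_contra hc
  push_neg at hc
  obtain ⟨h1, h2⟩ := hc
  have nneg : ∀ (S : Set ℕ), (0:ℝ) ≤ ∑' k, S.indicator (A n) k := fun S =>
    tsum_nonneg fun k => Set.indicator_nonneg (fun k _ => hA.nonneg n k) k
  rw [abs_of_nonneg (nneg M)] at h1
  rw [abs_of_nonneg (nneg N)] at h2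
  rw [abs_of_nonneg (nneg (M ∪ N))] at hn
  have hle : (∑' k, (M ∪ N).indicator (A n) k) ≤
      (∑' k, M.indicator (A n) k) + ∑' k, N.indicator (A n) k := by
    rw [← Summable.tsum_add ((hA.summable n).indicator M) ((hA.summable n).indicator N)]
    refine Summable.tsum_le_tsum (fun k => ?_) ((hA.summable n).indicator (M ∪ N))
      (((hA.summable n).indicator M).add ((hA.summable n).indicator N))
    by_cases hk : k ∈ M ∪ N
    · rw [Set.indicator_of_mem hk]
      rcases hk with hk | hk
      · rw [Set.indicator_of_mem hk]
        have := Set.indicator_nonneg (f := A n) (s := N)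
          (fun k _ => hA.nonneg n k) k
        linarith
      · rw [Set.indicator_of_mem (s := N) hk]
        have := Set.indicator_nonneg (f := A n) (s := M)
          (fun k _ => hA.nonneg n k) k
        linarith
    · rw [Set.indicator_of_notMem hk]
      have := Set.indicator_nonneg (f := A n) (s := M)
        (fun k _ => hA.nonneg n k) k
      have := Set.indicator_nonneg (f := A n) (s := N)
        (fun k _ => hA.nonneg n k) k
      linarith
  linarith

theorem stmt_12 {X : Type*} [MetricSpace X] (A : ℕ → ℕ → ℝ) (I : Set (Set ℕ))
    (hA : RegularMatrix A) (hI : AdmissibleIdeal I) (x : ℕ → X) :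
    AIStatLimitPts I A x ⊆ AIStatClusterPts I A x ∧
      AIStatClusterPts I A x ⊆ LimitPts x := by
  constructor
  · rintro ζ ⟨f, hf, hnd, htend⟩ ε hε hdens
    apply hnd
    obtain ⟨N, hN⟩ := (Metric.tendsto_atTop.mp htend ε hε)
    have hsub : Set.range f ⊆ {k | dist (x k) ζ < ε} ∪ (f '' Set.Iio N) := by
      rintro k ⟨j, rfl⟩
      by_cases hj : j < N
      · exact Or.inr ⟨j, hj, rfl⟩
      · exact Or.inl (hN j (le_of_not_gt hj))
    exact aux_dens_mono hA hI hsub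
      (aux_dens_union hA hI hdens
        (aux_dens_finite hA hI ((Set.finite_Iio N).image f)))
  · intro ν hν
    have hinf : ∀ ε > 0, {k | dist (x k) ν < ε}.Infinite := by
      intro ε hε
      by_contra h
      rw [Set.not_infinite] at h
      exact hν ε hε (aux_dens_finite hA hI h)
    have hfreq : ∀ j : ℕ, ∃ᶠ k in atTop, dist (x k) ν < 1 / (j + 1) := by
      intro j
      have := hinf (1 / (j + 1)) (by positivity)
      rw [frequently_atTop]
      intro a
      obtain ⟨k, hk, hak⟩ := this.exists_gt a
      exact ⟨k, le_of_lt hak, hk⟩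
    obtain ⟨φ, hφ, hφ2⟩ := Filter.extraction_forall_of_frequently hfreq
    refine ⟨φ, hφ, ?_⟩
    rw [Metric.tendsto_atTop]
    intro ε hε
    obtain ⟨N, hN⟩ := exists_nat_gt (1 / ε)
    refine ⟨N, fun n hn => lt_of_lt_of_le (hφ2 n) ?_⟩
    have h1 : (1:ℝ)/ε < (n:ℝ)+1 := lt_of_lt_of_le hN (by exact_mod_cast Nat.le_succ_of_le hn)
    rw [div_le_iff₀ (by positivity)]
    rw [div_lt_iff₀ hε] at h1
    nlinarith
end

section
/- Let (X,d) be a metric space, (x_k) a sequence in X, and suppose δ_{A^I} satisfies property AP A^I O. If (x_k) is A^I-statistically convergent to μ ∈ X, then Λ_x = Γ_x = {μ}, where Λ_x is the set of A^I-statistical limit points and Γ_x is the set of A^I-statistical cluster points of (x_k) (paper's Theorem 4.2). -/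
open Filter Topology

/-!
Statistical convergence to `μ` makes every `Kⱼ = {k | 1/(j+1) ≤ d(xₖ, μ)}` a density-zero set.
Property AP`A^I`O turns this countable family into a single density-zero set `S` containing every
`Kⱼ` up to finitely many indices, so `x` converges to `μ` along `Sᶜ`. Since `Sᶜ` cannot have
density zero, enumerating it exhibits `μ` as a statistical limit point; and the neighbourhoods of
`μ` are statistically large, so `μ` is a statistical cluster point. Conversely, for `ν ≠ μ` a small
ball around `ν` lies in some `Kⱼ` and so has density zero. This rules out `ν` as a cluster point,
and as a limit point because a subsequence converging to `ν` eventually stays inside that ball.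
-/

namespace ILim

variable {I : Set (Set ℕ)} {t s : ℕ → ℝ}

lemma of_tendsto (hI : AdmissibleIdeal I) {L : ℝ} (h : Tendsto t atTop (𝓝 L)) :
    ILim I t L := by
  intro ε hε
  obtain ⟨N, hN⟩ := Metric.tendsto_atTop.mp h ε hε
  refine hI.finite_mem ((Set.finite_Iio N).subset fun n hn => ?_)
  by_contra hnN
  have := hN n (not_lt.mp hnN)
  rw [Real.dist_eq] at this
  exact (not_le.mpr this) hn

lemma unique (hI : AdmissibleIdeal I) {L₁ L₂ : ℝ} (h₁ : ILim I t L₁) (h₂ : ILim I t L₂) :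
    L₁ = L₂ := by
  by_contra hne
  have hε : 0 < |L₁ - L₂| / 2 := half_pos (abs_pos.mpr (sub_ne_zero.mpr hne))
  have hcover : Set.univ ⊆
      {n | |L₁ - L₂| / 2 ≤ |t n - L₁|} ∪ {n | |L₁ - L₂| / 2 ≤ |t n - L₂|} := by
    intro n _
    by_contra h
    simp only [Set.mem_union, Set.mem_ofPred_eq, not_or, not_le] at h
    have := abs_sub_le L₁ (t n) L₂
    rw [abs_sub_comm L₁ (t n)] at this
    linarith
  exact hI.univ_not_mem (hI.subset_mem (hI.union_mem (h₁ _ hε) (h₂ _ hε)) hcover)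

lemma add (hI : AdmissibleIdeal I) {L M : ℝ} (h₁ : ILim I t L) (h₂ : ILim I s M) :
    ILim I (fun n => t n + s n) (L + M) := by
  intro ε hε
  have hε' := half_pos hε
  refine hI.subset_mem (hI.union_mem (h₁ _ hε') (h₂ _ hε')) fun n hn => ?_
  by_contra h
  simp only [Set.mem_union, Set.mem_ofPred_eq, not_or, not_le] at h hn
  have := abs_add_le (t n - L) (s n - M)
  rw [show t n - L + (s n - M) = t n + s n - (L + M) by ring] at this
  linarith

lemma squeeze_zero (hI : AdmissibleIdeal I) (h0 : ∀ n, 0 ≤ t n) (hts : ∀ n, t n ≤ s n)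
    (hs : ILim I s 0) : ILim I t 0 := by
  intro ε hε
  refine hI.subset_mem (hs ε hε) fun n hn => ?_
  simp only [Set.mem_ofPred_eq, sub_zero, abs_of_nonneg (h0 n)] at hn ⊢
  exact hn.trans ((hts n).trans (le_abs_self _))

end ILim

lemma RegularMatrix.tsum_indicator_nonneg {A : ℕ → ℕ → ℝ} (hA : RegularMatrix A) (M : Set ℕ)
    (n : ℕ) : 0 ≤ ∑' k, M.indicator (A n) k :=
  tsum_nonneg fun k => Set.indicator_nonneg (fun k _ => hA.nonneg n k) k

namespace AIDensity

variable {I : Set (Set ℕ)} {A : ℕ → ℕ → ℝ} {M N : Set ℕ}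

lemma mono (hA : RegularMatrix A) (hI : AdmissibleIdeal I) (hMN : M ⊆ N)
    (hN : AIDensity I A N 0) : AIDensity I A M 0 :=
  ILim.squeeze_zero hI (hA.tsum_indicator_nonneg _)
    (fun n => Summable.tsum_le_tsum
      (fun k => Set.indicator_le_indicator_of_subset hMN (fun k => hA.nonneg n k) k)
      ((hA.summable n).indicator M) ((hA.summable n).indicator N)) hN

lemma union (hA : RegularMatrix A) (hI : AdmissibleIdeal I) (hM : AIDensity I A M 0)
    (hN : AIDensity I A N 0) : AIDensity I A (M ∪ N) 0 := by
  have hsum := hM.add hI hN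
  rw [add_zero] at hsum
  refine ILim.squeeze_zero hI (hA.tsum_indicator_nonneg _) (fun n => ?_) hsum
  have hM' := (hA.summable n).indicator M
  have hN' := (hA.summable n).indicator N
  calc ∑' k, (M ∪ N).indicator (A n) k
      ≤ ∑' k, (M.indicator (A n) k + N.indicator (A n) k) :=
        Summable.tsum_le_tsum
          (fun k => by
            have := Set.indicator_union_add_inter_apply (A n) M N k
            have := Set.indicator_nonneg (fun k _ => hA.nonneg n k) (s := M ∩ N) k
            linarith)
          ((hA.summable n).indicator _) (hM'.add hN')
    _ = (∑' k, M.indicator (A n) k) + ∑' k, N.indicator (A n) k := hM'.tsum_add hN'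

lemma of_finite (hA : RegularMatrix A) (hI : AdmissibleIdeal I) (hM : M.Finite) :
    AIDensity I A M 0 := by
  refine ILim.of_tendsto hI ?_
  have hsum : ∀ n, ∑' k, M.indicator (A n) k = ∑ k ∈ hM.toFinset, A n k := fun n => by
    rw [tsum_eq_sum (s := hM.toFinset) fun k hk =>
      Set.indicator_of_notMem (by simpa using hk) _]
    exact Finset.sum_congr rfl fun k hk => Set.indicator_of_mem (by simpa using hk) _
  simpa only [hsum, Finset.sum_const_zero] using
    tendsto_finsetSum hM.toFinset fun k _ => hA.col_lim k

lemma univ (hA : RegularMatrix A) (hI : AdmissibleIdeal I) : AIDensity I A Set.univ 1 :=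
  ILim.of_tendsto hI (by simpa only [Set.indicator_univ] using hA.row_sum)

lemma not_compl (hA : RegularMatrix A) (hI : AdmissibleIdeal I) (hM : AIDensity I A M 0) :
    ¬ AIDensity I A Mᶜ 0 := fun hMc => by
  have := hM.union hA hI hMc
  rw [Set.union_compl_self] at this
  exact zero_ne_one (ILim.unique hI this (univ hA hI))

lemma infinite_compl (hA : RegularMatrix A) (hI : AdmissibleIdeal I)
    (hM : AIDensity I A M 0) : Mᶜ.Infinite := fun hfin =>
  hM.not_compl hA hI (of_finite hA hI hfin)

end AIDensity

section

variable {I : Set (Set ℕ)} {A : ℕ → ℕ → ℝ}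

lemma APAIO.exists_aiDensity_zero_diff_finite (hA : RegularMatrix A) (hI : AdmissibleIdeal I)
    (hAP : APAIO I A) {K : ℕ → Set ℕ} (hK : ∀ j, AIDensity I A (K j) 0) :
    ∃ S, AIDensity I A S 0 ∧ ∀ j, (K j \ S).Finite := by
  obtain ⟨H, hGH, hS⟩ := hAP (disjointed K) (disjoint_disjointed K)
    fun j => (hK j).mono hA hI (disjointed_subset K j)
  refine ⟨⋃ i, H i, hS, fun j => ?_⟩
  refine ((Finset.Iic j).finite_toSet.biUnion fun i _ => hGH i).subset ?_
  rintro k ⟨hkK, hkS⟩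
  have hk : k ∈ ⋃ i ∈ Finset.Iic j, disjointed K i := by
    rw [biUnion_Iic_disjointed]
    exact le_partialSups K j hkK
  obtain ⟨i, hij, hki⟩ := Set.mem_iUnion₂.mp hk
  exact Set.mem_biUnion hij (Or.inl ⟨hki, fun hkH => hkS (Set.mem_iUnion.mpr ⟨i, hkH⟩)⟩)

variable {X : Type*} [MetricSpace X] {x : ℕ → X} {μ : X}

lemma AIStatConv.exists_aiDensity_zero_tendsto (hA : RegularMatrix A) (hI : AdmissibleIdeal I)
    (hAP : APAIO I A) (hx : AIStatConv I A x μ) :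
    ∃ S, AIDensity I A S 0 ∧ Tendsto x (cofinite ⊓ 𝓟 Sᶜ) (𝓝 μ) := by
  obtain ⟨S, hS, hfin⟩ := hAP.exists_aiDensity_zero_diff_finite hA hI
    (K := fun j => {k | 1 / ((j : ℝ) + 1) ≤ dist (x k) μ}) fun j => hx _ Nat.one_div_pos_of_nat
  refine ⟨S, hS, Metric.tendsto_nhds.mpr fun ε hε => ?_⟩
  obtain ⟨j, hj⟩ := exists_nat_one_div_lt hε
  rw [eventually_inf_principal, eventually_cofinite]
  refine (hfin j).subset fun k hk => ?_
  simp only [Set.mem_ofPred_eq, Set.mem_compl_iff, Classical.not_imp, not_lt] at hk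
  exact ⟨hj.le.trans hk.2, hk.1⟩

lemma AIStatConv.mem_aiStatLimitPts (hA : RegularMatrix A) (hI : AdmissibleIdeal I)
    (hAP : APAIO I A) (hx : AIStatConv I A x μ) : μ ∈ AIStatLimitPts I A x := by
  obtain ⟨S, hS, hlim⟩ := hx.exists_aiDensity_zero_tendsto hA hI hAP
  have hinf := hS.infinite_compl hA hI
  have hmono := Nat.nth_strictMono (p := (· ∈ Sᶜ)) hinf
  refine ⟨Nat.nth (· ∈ Sᶜ), hmono, ?_, hlim.comp ?_⟩
  · rw [Nat.range_nth_of_infinite (p := (· ∈ Sᶜ)) hinf]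
    exact hS.not_compl hA hI
  · rw [← Nat.cofinite_eq_atTop]
    exact tendsto_inf.mpr ⟨hmono.injective.tendsto_cofinite,
      tendsto_principal.mpr
        (Eventually.of_forall (Nat.nth_mem_of_infinite (p := (· ∈ Sᶜ)) hinf))⟩

lemma AIStatConv.mem_aiStatClusterPts (hA : RegularMatrix A) (hI : AdmissibleIdeal I)
    (hx : AIStatConv I A x μ) : μ ∈ AIStatClusterPts I A x := by
  intro ε hε hball
  have hfar := hball.not_compl hA hI
  simp only [Set.compl_ofPred, not_lt] at hfar
  exact hfar (hx ε hε)

lemma AIStatConv.exists_aiDensity_ball_zero (hA : RegularMatrix A) (hI : AdmissibleIdeal I)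
    (hx : AIStatConv I A x μ) {ν : X} (hν : ν ≠ μ) :
    ∃ ε > 0, AIDensity I A {k | dist (x k) ν < ε} 0 := by
  have hε : 0 < dist ν μ / 2 := half_pos (dist_pos.mpr hν)
  refine ⟨_, hε, (hx _ hε).mono hA hI fun k hk => ?_⟩
  simp only [Set.mem_ofPred_eq] at hk ⊢
  linarith [dist_triangle_left ν μ (x k)]

lemma AIStatConv.aiStatClusterPts_subset (hA : RegularMatrix A) (hI : AdmissibleIdeal I)
    (hx : AIStatConv I A x μ) : AIStatClusterPts I A x ⊆ {μ} := fun ν hν => by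
  by_contra hne
  obtain ⟨ε, hε, hball⟩ := hx.exists_aiDensity_ball_zero hA hI hne
  exact hν ε hε hball

lemma AIStatConv.aiStatLimitPts_subset (hA : RegularMatrix A) (hI : AdmissibleIdeal I)
    (hx : AIStatConv I A x μ) : AIStatLimitPts I A x ⊆ {μ} := by
  rintro ζ ⟨f, -, hnd, hconv⟩
  by_contra hne
  obtain ⟨ε, hε, hball⟩ := hx.exists_aiDensity_ball_zero hA hI hne
  obtain ⟨J, hJ⟩ := Metric.tendsto_atTop.mp hconv ε hε
  have hsmall : AIDensity I A (f '' Set.Iio J ∪ {k | dist (x k) ζ < ε}) 0 :=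
    (AIDensity.of_finite hA hI ((Set.finite_Iio J).image f)).union hA hI hball
  refine hnd (hsmall.mono hA hI ?_)
  rintro _ ⟨j, rfl⟩
  rcases lt_or_ge j J with hj | hj
  · exact Or.inl ⟨j, hj, rfl⟩
  · exact Or.inr (hJ j hj)

end

theorem stmt_13 {X : Type*} [MetricSpace X] (A : ℕ → ℕ → ℝ) (I : Set (Set ℕ))
    (hA : RegularMatrix A) (hI : AdmissibleIdeal I) (hAP : APAIO I A)
    (x : ℕ → X) (μ : X) (hx : AIStatConv I A x μ) :
    AIStatLimitPts I A x = {μ} ∧ AIStatClusterPts I A x = {μ} :=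
  ⟨(hx.aiStatLimitPts_subset hA hI).antisymm
      (Set.singleton_subset_iff.mpr (hx.mem_aiStatLimitPts hA hI hAP)),
    (hx.aiStatClusterPts_subset hA hI).antisymm
      (Set.singleton_subset_iff.mpr (hx.mem_aiStatClusterPts hA hI))⟩
end

section
/- Let (X,d) be a metric space and (x_k) a sequence in X. Suppose there exist an infinite set M ⊆ ℕ whose A^I-density is not equal to 0 (it is nonzero or does not exist) and a compact subset C of X with x_k ∈ C for every k ∈ M. Then the set Γ_x of A^I-statistical cluster points of (x_k) is non-empty and closed (paper's Theorem 4.6). -/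
open Filter Topology

lemma dens_mono {A : ℕ → ℕ → ℝ} {I : Set (Set ℕ)} (hA : RegularMatrix A)
    (hI : AdmissibleIdeal I) {S T : Set ℕ} (hST : S ⊆ T)
    (hT : AIDensity I A T 0) : AIDensity I A S 0 := by
  intro ε hε
  refine hI.subset_mem (hT ε hε) ?_
  intro n hn
  simp only [Set.mem_setOf_eq, sub_zero] at hn ⊢
  have hs : Summable (S.indicator (A n)) := (hA.summable n).indicator S
  have ht : Summable (T.indicator (A n)) := (hA.summable n).indicator T
  have h1 : (∑' k, S.indicator (A n) k) ≤ ∑' k, T.indicator (A n) k :=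
    Summable.tsum_le_tsum
      (fun k => Set.indicator_le_indicator_of_subset hST (fun k => hA.nonneg n k) k) hs ht
  have h2 : 0 ≤ ∑' k, S.indicator (A n) k :=
    tsum_nonneg (fun k => Set.indicator_nonneg (fun k _ => hA.nonneg n k) k)
  have h3 : 0 ≤ ∑' k, T.indicator (A n) k := h2.trans h1
  rw [abs_of_nonneg h2] at hn
  rw [abs_of_nonneg h3]
  exact hn.trans h1

lemma dens_empty {A : ℕ → ℕ → ℝ} {I : Set (Set ℕ)} (hI : AdmissibleIdeal I) :
    AIDensity I A ∅ 0 := by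
  intro ε hε
  simp only [Set.indicator_empty, tsum_zero, sub_zero, abs_zero]
  have h : {n : ℕ | ε ≤ (0:ℝ)} = ∅ := by
    ext n; simp only [Set.mem_setOf_eq, Set.mem_empty_iff_false, iff_false, not_le]; exact hε
  rw [h]
  exact hI.finite_mem Set.finite_empty

lemma dens_union {A : ℕ → ℕ → ℝ} {I : Set (Set ℕ)} (hA : RegularMatrix A)
    (hI : AdmissibleIdeal I) {S T : Set ℕ}
    (hS : AIDensity I A S 0) (hT : AIDensity I A T 0) : AIDensity I A (S ∪ T) 0 := by
  intro ε hε
  have h := hI.union_mem (hS (ε/2) (by linarith)) (hT (ε/2) (by linarith))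
  refine hI.subset_mem h ?_
  intro n hn
  simp only [Set.mem_setOf_eq, sub_zero, Set.mem_union] at hn ⊢
  have hs : Summable (S.indicator (A n)) := (hA.summable n).indicator S
  have ht : Summable (T.indicator (A n)) := (hA.summable n).indicator T
  have hst : Summable ((S ∪ T).indicator (A n)) := (hA.summable n).indicator _
  have hpt : ∀ k, (S ∪ T).indicator (A n) k ≤ S.indicator (A n) k + T.indicator (A n) k := by
    intro k
    have := hA.nonneg n k
    by_cases hkS : k ∈ S <;> by_cases hkT : k ∈ T <;>
      simp [Set.indicator, hkS, hkT] <;> linarith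
  have h1 : (∑' k, (S ∪ T).indicator (A n) k)
      ≤ (∑' k, S.indicator (A n) k) + ∑' k, T.indicator (A n) k := by
    calc (∑' k, (S ∪ T).indicator (A n) k)
        ≤ ∑' k, (S.indicator (A n) k + T.indicator (A n) k) :=
          Summable.tsum_le_tsum hpt hst (hs.add ht)
      _ = (∑' k, S.indicator (A n) k) + ∑' k, T.indicator (A n) k := Summable.tsum_add hs ht
  have h2 : 0 ≤ ∑' k, S.indicator (A n) k :=
    tsum_nonneg (fun k => Set.indicator_nonneg (fun k _ => hA.nonneg n k) k)
  have h3 : 0 ≤ ∑' k, T.indicator (A n) k :=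
    tsum_nonneg (fun k => Set.indicator_nonneg (fun k _ => hA.nonneg n k) k)
  have h4 : 0 ≤ ∑' k, (S ∪ T).indicator (A n) k :=
    tsum_nonneg (fun k => Set.indicator_nonneg (fun k _ => hA.nonneg n k) k)
  rw [abs_of_nonneg h4] at hn
  by_contra hc
  push_neg at hc
  obtain ⟨hc1, hc2⟩ := hc
  rw [abs_of_nonneg h2] at hc1
  rw [abs_of_nonneg h3] at hc2
  linarith

lemma dens_biUnion {α : Type*} {A : ℕ → ℕ → ℝ} {I : Set (Set ℕ)} (hA : RegularMatrix A)
    (hI : AdmissibleIdeal I) (t : Finset α) (G : α → Set ℕ)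
    (h : ∀ y ∈ t, AIDensity I A (G y) 0) : AIDensity I A (⋃ y ∈ t, G y) 0 := by
  classical
  induction t using Finset.induction with
  | empty => simpa using dens_empty (A := A) hI
  | @insert a s hy ih =>
    rw [Finset.set_biUnion_insert]
    exact dens_union hA hI (h a (Finset.mem_insert_self a s))
      (ih fun y hyt => h y (Finset.mem_insert_of_mem hyt))

theorem stmt_18 {X : Type*} [MetricSpace X] (A : ℕ → ℕ → ℝ) (I : Set (Set ℕ))
    (hA : RegularMatrix A) (hI : AdmissibleIdeal I) (x : ℕ → X)
    (M : Set ℕ) (hMinf : M.Infinite) (hM : ¬ AIDensity I A M 0)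
    (C : Set X) (hC : IsCompact C) (hxC : ∀ k ∈ M, x k ∈ C) :
    (AIStatClusterPts I A x).Nonempty ∧ IsClosed (AIStatClusterPts I A x) := by
  constructor
  · by_contra hΓ
    rw [Set.not_nonempty_iff_eq_empty] at hΓ
    have hy : ∀ y : X, ∃ ε > 0, AIDensity I A {k | dist (x k) y < ε} 0 := by
      intro y
      have hyn : y ∉ AIStatClusterPts I A x := by
        rw [hΓ]; exact Set.notMem_empty y
      simp only [AIStatClusterPts, Set.mem_setOf_eq] at hyn
      push_neg at hyn
      exact hyn
    choose ε hεpos hεd using hy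
    have hcover : C ⊆ ⋃ y : X, Metric.ball y (ε y) := fun y _ =>
      Set.mem_iUnion.2 ⟨y, Metric.mem_ball_self (hεpos y)⟩
    obtain ⟨t, ht⟩ := hC.elim_finite_subcover (fun y : X => Metric.ball y (ε y))
      (fun y => Metric.isOpen_ball) hcover
    have hMsub : M ⊆ ⋃ y ∈ t, {k | dist (x k) y < ε y} := by
      intro k hk
      obtain ⟨y, hyt, hyb⟩ := Set.mem_iUnion₂.1 (ht (hxC k hk))
      exact Set.mem_iUnion₂.2 ⟨y, hyt, Metric.mem_ball.1 hyb⟩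
    exact hM (dens_mono hA hI hMsub (dens_biUnion hA hI t _ fun y _ => hεd y))
  · refine isClosed_of_closure_subset ?_
    intro ν hν ε hε hden
    obtain ⟨μ, hμΓ, hμd⟩ := Metric.mem_closure_iff.1 hν (ε/2) (by linarith)
    refine hμΓ (ε/2) (by linarith) (dens_mono hA hI ?_ hden)
    intro k hk
    simp only [Set.mem_setOf_eq] at hk ⊢
    have h1 := dist_triangle (x k) μ ν
    have h2 : dist μ ν = dist ν μ := dist_comm μ ν
    linarith
end
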